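/- arXiv:1909.09257 — 2 statements merged into one kernel-verified Lean document; each statement's English description precedes it below -/
import Mathlib

section
/- Let T > 0, β > 0, α ∈ ℝ, let I be a finite set, let c : I → ℝ, Δ : I → ℝ and q̄ > 0. Let u : [0,T] × ℝ → ℝ be such that u(t,Q) < 0 for all (t,Q) and t ↦ u(t,Q) is differentiable for each Q, and define ũ(t,Q) = (−u(t,Q))^{−β}. Then the following are equivalent: (i) for all (t,Q) ∈ [0,T] × ℝ, ∂_t u(t,Q) + α u(t,Q) Q² − u(t,Q) Σ_{i∈I} Σ_{s∈{−1,1}} c_i ((−u(t,Q))/(−u(t,Q − sΔ_i)))^β · 1_{sQ > −q̄} = 0 and u(T,Q) = −1; (ii) for all (t,Q) ∈ [0,T] × ℝ, ∂_t ũ(t,Q) − αβ ũ(t,Q) Q² + β Σ_{i∈I} Σ_{s∈{−1,1}} c_i ũ(t,Q − sΔ_i) · 1_{sQ > −q̄} = 0 and ũ(T,Q) = 1. -/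
/-!
Writing `x = -u(t,Q) > 0`, the chain rule gives `∂ₜ(x^{-β}) = β x^{-β-1} ∂ₜu`, and
`x^{-β} (x / y)^β = y^{-β}` turns every jump term of the HJB equation into the corresponding
term of the linear one. Hence the linear residual is the HJB residual multiplied by the
positive factor `β x^{-β-1}`, so the two vanish together; the terminal conditions agree
because `x ↦ x^{-β}` is injective on `(0, ∞)`.
-/

open Real Finset

theorem HasDerivAt.neg_rpow_neg {f : ℝ → ℝ} {f' t : ℝ} (β : ℝ) (hf : HasDerivAt f f' t)
    (hft : f t < 0) :
    HasDerivAt (fun s => (-f s) ^ (-β)) (β * (-f t) ^ (-β - 1) * f') t :=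
  (hf.neg.rpow_const (Or.inl (neg_pos.mpr hft).ne')).congr_deriv (by rw [Pi.neg_apply]; ring)

theorem Real.rpow_neg_mul_div_rpow (β : ℝ) {x y : ℝ} (hx : 0 < x) (hy : 0 < y) :
    x ^ (-β) * (x / y) ^ β = y ^ (-β) := by
  rw [div_rpow hx.le hy.le, rpow_neg hx.le, rpow_neg hy.le]
  have : x ^ β ≠ 0 := (rpow_pos_of_pos hx β).ne'
  field_simp

theorem Real.rpow_neg_eq_one_iff {β x : ℝ} (hβ : β ≠ 0) (hx : 0 < x) :
    x ^ (-β) = 1 ↔ x = 1 := by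
  simpa only [one_rpow] using rpow_left_inj hx.le zero_le_one (neg_ne_zero.mpr hβ)

noncomputable section

namespace HJB

variable (α β : ℝ) {I : Type*} [Fintype I] (c Δ : I → ℝ) (qbar : ℝ) (u : ℝ → ℝ → ℝ)

def residual (t Q : ℝ) : ℝ :=
  deriv (fun s => u s Q) t + α * u t Q * Q ^ 2
    - u t Q * ∑ i : I, ∑ s ∈ ({-1, 1} : Finset ℝ),
        c i * ((-u t Q) / (-u t (Q - s * Δ i))) ^ β * (if -qbar < s * Q then (1 : ℝ) else 0)

def linearizedResidual (t Q : ℝ) : ℝ :=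
  deriv (fun s => (-u s Q) ^ (-β)) t - α * β * (-u t Q) ^ (-β) * Q ^ 2
    + β * ∑ i : I, ∑ s ∈ ({-1, 1} : Finset ℝ),
        c i * (-u t (Q - s * Δ i)) ^ (-β) * (if -qbar < s * Q then (1 : ℝ) else 0)

variable {α β c Δ qbar u}

theorem linearizedResidual_eq_mul_residual {t Q : ℝ} (hneg : ∀ Q', u t Q' < 0)
    (hdiff : DifferentiableAt ℝ (fun s => u s Q) t) :
    linearizedResidual α β c Δ qbar u t Q
      = β * (-u t Q) ^ (-β - 1) * residual α β c Δ qbar u t Q := by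
  have hx : 0 < -u t Q := neg_pos.mpr (hneg Q)
  have hjumps : (-u t Q) ^ (-β) * ∑ i : I, ∑ s ∈ ({-1, 1} : Finset ℝ),
        c i * ((-u t Q) / (-u t (Q - s * Δ i))) ^ β * (if -qbar < s * Q then (1 : ℝ) else 0)
      = ∑ i : I, ∑ s ∈ ({-1, 1} : Finset ℝ),
        c i * (-u t (Q - s * Δ i)) ^ (-β) * (if -qbar < s * Q then (1 : ℝ) else 0) := by
    simp_rw [mul_sum]
    refine sum_congr rfl fun i _ => sum_congr rfl fun s _ => ?_
    linear_combination (c i * if -qbar < s * Q then (1 : ℝ) else 0)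
      * rpow_neg_mul_div_rpow β hx (neg_pos.mpr (hneg (Q - s * Δ i)))
  have hmul : (-u t Q) ^ (-β - 1) * (-u t Q) = (-u t Q) ^ (-β) := by
    rw [rpow_sub_one hx.ne', div_mul_cancel₀ _ hx.ne']
  rw [linearizedResidual, residual, (hdiff.hasDerivAt.neg_rpow_neg β (hneg Q)).deriv,
    ← hjumps, ← hmul]
  ring

end HJB

end

open HJB in
theorem hjb_linearization_equiv_general
    (T β : ℝ) (hT : 0 < T) (hβ : 0 < β) (α : ℝ)
    (I : Type*) [Fintype I] (c Δ : I → ℝ) (qbar : ℝ)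
    (u : ℝ → ℝ → ℝ)
    (hneg : ∀ t ∈ Set.Icc (0 : ℝ) T, ∀ Q : ℝ, u t Q < 0)
    (hdiff : ∀ Q : ℝ, ∀ t ∈ Set.Icc (0 : ℝ) T, DifferentiableAt ℝ (fun s => u s Q) t) :
    ((∀ Q : ℝ, ∀ t ∈ Set.Icc (0 : ℝ) T,
        deriv (fun s => u s Q) t + α * u t Q * Q ^ 2
          - u t Q * ∑ i : I, ∑ s ∈ ({-1, 1} : Finset ℝ),
              c i * ((-u t Q) / (-u t (Q - s * Δ i))) ^ β
                * (if -qbar < s * Q then (1 : ℝ) else 0) = 0)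
      ∧ (∀ Q : ℝ, u T Q = -1))
    ↔ ((∀ Q : ℝ, ∀ t ∈ Set.Icc (0 : ℝ) T,
        deriv (fun s => (-u s Q) ^ (-β)) t - α * β * (-u t Q) ^ (-β) * Q ^ 2
          + β * ∑ i : I, ∑ s ∈ ({-1, 1} : Finset ℝ),
              c i * (-u t (Q - s * Δ i)) ^ (-β)
                * (if -qbar < s * Q then (1 : ℝ) else 0) = 0)
      ∧ (∀ Q : ℝ, (-u T Q) ^ (-β) = 1)) := by
  refine and_congr (forall_congr' fun Q => forall₂_congr fun t ht => ?_)
    (forall_congr' fun Q => ?_)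
  · show residual α β c Δ qbar u t Q = 0 ↔ linearizedResidual α β c Δ qbar u t Q = 0
    have hfactor : β * (-u t Q) ^ (-β - 1) ≠ 0 :=
      mul_ne_zero hβ.ne' (rpow_pos_of_pos (neg_pos.mpr (hneg t ht Q)) _).ne'
    rw [linearizedResidual_eq_mul_residual (hneg t ht) (hdiff Q t ht), mul_eq_zero,
      or_iff_right hfactor]
  · rw [rpow_neg_eq_one_iff hβ.ne' (neg_pos.mpr (hneg T ⟨hT.le, le_rfl⟩ Q)),
      neg_eq_iff_eq_neg]

/-- **Linearization of the exchange's HJB equation by the change of variables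
`ũ = (−u)^{−β}`.**
Let `T > 0`, `β > 0`, `α ∈ ℝ`, `I` a finite set, `c, Δ : I → ℝ`, `q̄ > 0`, and let
`u : [0,T] × ℝ → ℝ` be negative and differentiable in time. Then `u` solves the
nonlinear HJB equation
`∂_t u + α u Q² − u Σ_{i,s} c_i ((−u(t,Q))/(−u(t,Q − sΔ_i)))^β 1_{sQ > −q̄} = 0`,
`u(T,·) = −1`, if and only if `ũ = (−u)^{−β}` solves the linear equation
`∂_t ũ − αβ ũ Q² + β Σ_{i,s} c_i ũ(t, Q − sΔ_i) 1_{sQ > −q̄} = 0`, `ũ(T,·) = 1`. -/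
theorem hjb_linearization_equiv
    (T β : ℝ) (hT : 0 < T) (hβ : 0 < β) (α : ℝ)
    (I : Type*) [Fintype I] (c Δ : I → ℝ) (qbar : ℝ) (hqbar : 0 < qbar)
    (u : ℝ → ℝ → ℝ)
    (hneg : ∀ t ∈ Set.Icc (0 : ℝ) T, ∀ Q : ℝ, u t Q < 0)
    (hdiff : ∀ Q : ℝ, ∀ t ∈ Set.Icc (0 : ℝ) T, DifferentiableAt ℝ (fun s => u s Q) t) :
    ((∀ Q : ℝ, ∀ t ∈ Set.Icc (0 : ℝ) T,
        deriv (fun s => u s Q) t + α * u t Q * Q ^ 2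
          - u t Q * ∑ i : I, ∑ s ∈ ({-1, 1} : Finset ℝ),
              c i * ((-u t Q) / (-u t (Q - s * Δ i))) ^ β
                * (if -qbar < s * Q then (1 : ℝ) else 0) = 0)
      ∧ (∀ Q : ℝ, u T Q = -1))
    ↔ ((∀ Q : ℝ, ∀ t ∈ Set.Icc (0 : ℝ) T,
        deriv (fun s => (-u s Q) ^ (-β)) t - α * β * (-u t Q) ^ (-β) * Q ^ 2
          + β * ∑ i : I, ∑ s ∈ ({-1, 1} : Finset ℝ),
              c i * (-u t (Q - s * Δ i)) ^ (-β)
                * (if -qbar < s * Q then (1 : ℝ) else 0) = 0)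
      ∧ (∀ Q : ℝ, (-u T Q) ^ (-β) = 1)) :=
  hjb_linearization_equiv_general T β hT hβ α I c Δ qbar u hneg hdiff
end

section
/- Let T > 0, β > 0, α ∈ ℝ, let I be a finite set, c : I → ℝ, Δ : I → ℝ, q̄ > 0, and let u : [0,T] × ℝ → ℝ be everywhere negative, differentiable in t, and satisfy for all (t,Q): ∂_t u(t,Q) + α u(t,Q) Q² − u(t,Q) Σ_{i∈I} Σ_{s∈{−1,1}} c_i ((−u(t,Q))/(−u(t,Q − sΔ_i)))^β 1_{sQ > −q̄} = 0 with u(T,·) = −1. Define v : [0,T] × ℝ^I → ℝ by v(t,q) = u(t, Σ_{i∈I} Δ_i q_i). Then v is everywhere negative, differentiable in t, v(T,·) = −1, and for all (t,q) ∈ [0,T] × ℝ^I: ∂_t v(t,q) + α v(t,q) (Σ_{i∈I} Δ_i q_i)² − v(t,q) Σ_{i∈I} Σ_{s∈{−1,1}} c_i ((−v(t,q))/(−v(t, q − s e_i)))^β 1_{s Σ_{j∈I} Δ_j q_j > −q̄} = 0, where q − s e_i denotes the vector q with its i-th coordinate decreased by s. -/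
theorem sum_mul_update_sub {R ι : Type*} [CommRing R] [Fintype ι] [DecidableEq ι]
    (w q : ι → R) (i : ι) (s : R) :
    ∑ j, w j * Function.update q i (q i - s) j = ∑ j, w j * q j - s * w i := by
  have hupdate : Function.update q i (q i - s) = q - Pi.single i s := by
    ext j; rcases eq_or_ne j i with rfl | h <;> simp [*]
  simp [hupdate, mul_sub, Finset.sum_sub_distrib, Pi.single_apply, mul_comm]

theorem hjb_aggregation_ansatz_general
    (T β : ℝ) (α : ℝ)
    (I : Type*) [Fintype I] [DecidableEq I] (c Δ : I → ℝ) (qbar : ℝ)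
    (u : ℝ → ℝ → ℝ)
    (hneg : ∀ t ∈ Set.Icc (0 : ℝ) T, ∀ Q : ℝ, u t Q < 0)
    (hdiff : ∀ Q : ℝ, ∀ t ∈ Set.Icc (0 : ℝ) T, DifferentiableAt ℝ (fun s => u s Q) t)
    (hpde : ∀ Q : ℝ, ∀ t ∈ Set.Icc (0 : ℝ) T,
      deriv (fun s => u s Q) t + α * u t Q * Q ^ 2
        - u t Q * ∑ i : I, ∑ s ∈ ({-1, 1} : Finset ℝ),
            c i * ((-u t Q) / (-u t (Q - s * Δ i))) ^ β
              * (if -qbar < s * Q then (1 : ℝ) else 0) = 0)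
    (hterm : ∀ Q : ℝ, u T Q = -1)
    (v : ℝ → (I → ℝ) → ℝ)
    (hv : ∀ (t : ℝ) (q : I → ℝ), v t q = u t (∑ i : I, Δ i * q i)) :
    (∀ t ∈ Set.Icc (0 : ℝ) T, ∀ q : I → ℝ, v t q < 0)
      ∧ (∀ q : I → ℝ, ∀ t ∈ Set.Icc (0 : ℝ) T,
          DifferentiableAt ℝ (fun s => v s q) t)
      ∧ (∀ q : I → ℝ, v T q = -1)
      ∧ (∀ t ∈ Set.Icc (0 : ℝ) T, ∀ q : I → ℝ,
          deriv (fun s => v s q) t + α * v t q * (∑ i : I, Δ i * q i) ^ 2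
            - v t q * ∑ i : I, ∑ s ∈ ({-1, 1} : Finset ℝ),
                c i * ((-v t q) / (-v t (Function.update q i (q i - s)))) ^ β
                  * (if -qbar < s * ∑ j : I, Δ j * q j then (1 : ℝ) else 0) = 0) := by
  obtain rfl : v = fun t q => u t (∑ i, Δ i * q i) := funext₂ hv
  refine ⟨fun t ht q => hneg t ht _, fun q t ht => hdiff _ t ht, fun q => hterm _, ?_⟩
  intro t ht q
  simpa only [sum_mul_update_sub] using hpde _ t ht

/-- **Aggregation ansatz: a solution of the one-dimensional reduced HJB yields a
solution of the multi-dimensional HJB via the delta-weighted inventory.**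
Let `T > 0`, `β > 0`, `α ∈ ℝ`, `I` a finite set, `c, Δ : I → ℝ`, `q̄ > 0`, and let
`u : [0,T] × ℝ → ℝ` be negative, differentiable in time, with `u(T,·) = −1`, solving
`∂_t u + α u Q² − u Σ_{i,s} c_i ((−u(t,Q))/(−u(t,Q − sΔ_i)))^β 1_{sQ > −q̄} = 0`.
Then `v(t,q) = u(t, Σ_i Δ_i q_i)` is negative, differentiable in time, satisfies
`v(T,·) = −1`, and solves the multi-dimensional HJB equation where the `i`-th jump
decreases the `i`-th coordinate of `q` by `s`. -/
theorem hjb_aggregation_ansatz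
    (T β : ℝ) (hT : 0 < T) (hβ : 0 < β) (α : ℝ)
    (I : Type*) [Fintype I] [DecidableEq I] (c Δ : I → ℝ) (qbar : ℝ) (hqbar : 0 < qbar)
    (u : ℝ → ℝ → ℝ)
    (hneg : ∀ t ∈ Set.Icc (0 : ℝ) T, ∀ Q : ℝ, u t Q < 0)
    (hdiff : ∀ Q : ℝ, ∀ t ∈ Set.Icc (0 : ℝ) T, DifferentiableAt ℝ (fun s => u s Q) t)
    (hpde : ∀ Q : ℝ, ∀ t ∈ Set.Icc (0 : ℝ) T,
      deriv (fun s => u s Q) t + α * u t Q * Q ^ 2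
        - u t Q * ∑ i : I, ∑ s ∈ ({-1, 1} : Finset ℝ),
            c i * ((-u t Q) / (-u t (Q - s * Δ i))) ^ β
              * (if -qbar < s * Q then (1 : ℝ) else 0) = 0)
    (hterm : ∀ Q : ℝ, u T Q = -1)
    (v : ℝ → (I → ℝ) → ℝ)
    (hv : ∀ (t : ℝ) (q : I → ℝ), v t q = u t (∑ i : I, Δ i * q i)) :
    (∀ t ∈ Set.Icc (0 : ℝ) T, ∀ q : I → ℝ, v t q < 0)
      ∧ (∀ q : I → ℝ, ∀ t ∈ Set.Icc (0 : ℝ) T,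
          DifferentiableAt ℝ (fun s => v s q) t)
      ∧ (∀ q : I → ℝ, v T q = -1)
      ∧ (∀ t ∈ Set.Icc (0 : ℝ) T, ∀ q : I → ℝ,
          deriv (fun s => v s q) t + α * v t q * (∑ i : I, Δ i * q i) ^ 2
            - v t q * ∑ i : I, ∑ s ∈ ({-1, 1} : Finset ℝ),
                c i * ((-v t q) / (-v t (Function.update q i (q i - s)))) ^ β
                  * (if -qbar < s * ∑ j : I, Δ j * q j then (1 : ℝ) else 0) = 0) :=
  hjb_aggregation_ansatz_general T β α I c Δ qbar u hneg hdiff hpde hterm v hv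
end
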